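/- Let A ∈ ℂ^{m×m×p} with ind(A) ≤ k, let rank_M(A^k) = sp, and assume A admits a Drazin inverse A^D. Suppose A^k = Q̃ *_M R̃ *_M P^* is a full-rank decomposition where P ∈ ℂ^{m×m×p} satisfies P *_M P^* = I_M = P^* *_M P, Q̃ ∈ ℂ^{m×s×p} satisfies Q̃^* *_M Q̃ = I_M, and R̃ ∈ ℂ^{s×m×p} has rank_M(R̃) = sp. Then R̃ *_M P^* *_M A *_M Q̃ is invertible and Q̃ *_M (R̃ *_M P^* *_M A *_M Q̃)^{-1} *_M R̃ *_M P^* = A^D. -/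
import Mathlib


open Matrix Finset

/-- A third-order tensor in `ℂ^{m×n×p}`, given by its `p` frontal slices. -/
abbrev Tensor (m n p : ℕ) := Fin p → Matrix (Fin m) (Fin n) ℂ

/-- The transform `Â = A ×₃ M` (mode-3 product with `M`). -/
noncomputable def hatT {m n p : ℕ} (M : Matrix (Fin p) (Fin p) ℂ) (A : Tensor m n p) :
    Tensor m n p :=
  fun l => ∑ s, M l s • A s

/-- `mat(A)`: the block-diagonal matrix whose blocks are frontal slices of `A ×₃ M`. -/
noncomputable def matT {m n p : ℕ} (M : Matrix (Fin p) (Fin p) ℂ) (A : Tensor m n p) :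
    Matrix (Fin m × Fin p) (Fin n × Fin p) ℂ :=
  Matrix.blockDiagonal (hatT M A)

/-- The M-product `A *_M B`, determined by `mat(A *_M B) = mat(A)·mat(B)`. -/
noncomputable def mprod {m n k p : ℕ} (M : Matrix (Fin p) (Fin p) ℂ)
    (A : Tensor m n p) (B : Tensor n k p) : Tensor m k p :=
  fun l => ∑ s, M⁻¹ l s • (hatT M A s * hatT M B s)

/-- The conjugate transpose `A^*`, determined by `mat(A^*) = mat(A)^*`. -/
noncomputable def mstar {m n p : ℕ} (M : Matrix (Fin p) (Fin p) ℂ) (A : Tensor m n p) :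
    Tensor n m p :=
  fun l => ∑ s, M⁻¹ l s • (hatT M A s)ᴴ

/-- The identity tensor `I_M ∈ ℂ^{m×m×p}`, determined by `mat(I_M) = I`. -/
noncomputable def idT {p : ℕ} (M : Matrix (Fin p) (Fin p) ℂ) (m : ℕ) : Tensor m m p :=
  fun l => ∑ s, M⁻¹ l s • (1 : Matrix (Fin m) (Fin m) ℂ)

/-- M-product powers of a square tensor. -/
noncomputable def mpow {m p : ℕ} (M : Matrix (Fin p) (Fin p) ℂ) (A : Tensor m m p) :
    ℕ → Tensor m m p
  | 0 => idT M m
  | k + 1 => mprod M A (mpow M A k)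

/-- `R_M(A)`: the column space of `mat(A)`. -/
noncomputable def rangeM {m n p : ℕ} (M : Matrix (Fin p) (Fin p) ℂ) (A : Tensor m n p) :
    Submodule ℂ (Fin m × Fin p → ℂ) :=
  LinearMap.range (matT M A).mulVecLin

/-- `N_M(A)`: the kernel of `mat(A)`. -/
noncomputable def kerM {m n p : ℕ} (M : Matrix (Fin p) (Fin p) ℂ) (A : Tensor m n p) :
    Submodule ℂ (Fin n × Fin p → ℂ) :=
  LinearMap.ker (matT M A).mulVecLin

/-- `rank_M(A) = rank(mat(A))`. -/
noncomputable def rankM {m n p : ℕ} (M : Matrix (Fin p) (Fin p) ℂ) (A : Tensor m n p) : ℕ :=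
  (matT M A).rank

/-- The first `s` lateral slices `Q(:,1:s,:)`. -/
def latSlice {n s p : ℕ} (hsn : s ≤ n) (Q : Tensor n n p) : Tensor n s p :=
  fun l => (Q l).submatrix id (Fin.castLE hsn)

/-- The first `s` horizontal slices `R(1:s,:,:)`. -/
def horSlice {n m s p : ℕ} (hsn : s ≤ n) (R : Tensor n m p) : Tensor s m p :=
  fun l => (R l).submatrix (Fin.castLE hsn) id

/-- Frobenius norm of a complex matrix. -/
noncomputable def frobNorm {α β : Type*} [Fintype α] [Fintype β] (X : Matrix α β ℂ) : ℝ :=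
  Real.sqrt (∑ i, ∑ j, ‖X i j‖ ^ 2)
section helpers

variable {m n k p : ℕ} {M : Matrix (Fin p) (Fin p) ℂ}

lemma hatT_unhat (hM : IsUnit M.det) (C : Fin p → Matrix (Fin m) (Fin n) ℂ) :
    hatT M (fun l => ∑ t, M⁻¹ l t • C t) = C := by
  funext l
  show ∑ t, M l t • ∑ u, M⁻¹ t u • C u = C l
  calc ∑ t, M l t • ∑ u, M⁻¹ t u • C u
      = ∑ u, (∑ t, M l t * M⁻¹ t u) • C u := by
        simp_rw [Finset.smul_sum, smul_smul]
        rw [Finset.sum_comm]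
        simp_rw [Finset.sum_smul]
    _ = C l := by
        simp_rw [← Matrix.mul_apply, Matrix.mul_nonsing_inv _ hM, Matrix.one_apply]
        simp

lemma unhat_hat (hM : IsUnit M.det) (A : Tensor m n p) :
    (fun l => ∑ t, M⁻¹ l t • hatT M A t) = A := by
  funext l
  show ∑ t, M⁻¹ l t • ∑ u, M t u • A u = A l
  calc ∑ t, M⁻¹ l t • ∑ u, M t u • A u
      = ∑ u, (∑ t, M⁻¹ l t * M t u) • A u := by
        simp_rw [Finset.smul_sum, smul_smul]
        rw [Finset.sum_comm]
        simp_rw [Finset.sum_smul]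
    _ = A l := by
        simp_rw [← Matrix.mul_apply, Matrix.nonsing_inv_mul _ hM, Matrix.one_apply]
        simp

lemma matT_injective (hM : IsUnit M.det) : Function.Injective (matT (m := m) (n := n) M) := by
  intro A B h
  have h2 : hatT M A = hatT M B := Matrix.blockDiagonal_injective h
  rw [← unhat_hat hM A, ← unhat_hat hM B, h2]

lemma hatT_mprod (hM : IsUnit M.det) (A : Tensor m n p) (B : Tensor n k p) :
    hatT M (mprod M A B) = fun l => hatT M A l * hatT M B l :=
  hatT_unhat hM _

lemma matT_mprod (hM : IsUnit M.det) (A : Tensor m n p) (B : Tensor n k p) :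
    matT M (mprod M A B) = matT M A * matT M B := by
  rw [matT, hatT_mprod hM, Matrix.blockDiagonal_mul]; rfl

lemma matT_idT (hM : IsUnit M.det) : matT M (idT M m) = 1 := by
  rw [matT]
  have : hatT M (idT M m) = fun _ => (1 : Matrix (Fin m) (Fin m) ℂ) := hatT_unhat hM _
  rw [this]
  exact Matrix.blockDiagonal_one

lemma matT_mpow (hM : IsUnit M.det) (A : Tensor m m p) (j : ℕ) :
    matT M (mpow M A j) = (matT M A) ^ j := by
  induction j with
  | zero => exact matT_idT hM
  | succ n ih => rw [mpow, matT_mprod hM, ih, pow_succ']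

lemma isUnit_of_rank_eq_card {ι : Type*} [Fintype ι] [DecidableEq ι]
    (B : Matrix ι ι ℂ) (h : B.rank = Fintype.card ι) : IsUnit B.det := by
  rw [isUnit_iff_ne_zero]
  intro hdet
  obtain ⟨v, hv, hBv⟩ := (Matrix.exists_mulVec_eq_zero_iff).2 hdet
  have hker : v ∈ LinearMap.ker B.mulVecLin := by simpa [Matrix.mulVecLin] using hBv
  have h1 : 1 ≤ Module.finrank ℂ (LinearMap.ker B.mulVecLin) := by
    rw [Nat.one_le_iff_ne_zero]
    intro h0
    have : LinearMap.ker B.mulVecLin = ⊥ := Submodule.finrank_eq_zero.mp h0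
    exact hv (by simpa [this] using hker)
  have hrn := LinearMap.finrank_range_add_finrank_ker B.mulVecLin
  rw [Module.finrank_pi] at hrn
  have : B.rank + 1 ≤ Fintype.card ι := by
    rw [Matrix.rank]
    omega
  omega

end helpers

lemma isUnit_of_rank_eq_card' {ι : Type*} [Fintype ι] [DecidableEq ι]
    (B : Matrix ι ι ℂ) (h : B.rank = Fintype.card ι) : IsUnit B.det := by
  rw [isUnit_iff_ne_zero]
  intro hdet
  obtain ⟨v, hv, hBv⟩ := (Matrix.exists_mulVec_eq_zero_iff).2 hdet
  have hker : v ∈ LinearMap.ker B.mulVecLin := by simpa [Matrix.mulVecLin] using hBv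
  have h1 : 1 ≤ Module.finrank ℂ (LinearMap.ker B.mulVecLin) := by
    rw [Nat.one_le_iff_ne_zero]
    intro h0
    have : LinearMap.ker B.mulVecLin = ⊥ := Submodule.finrank_eq_zero.mp h0
    exact hv (by simpa [this] using hker)
  have hrn := LinearMap.finrank_range_add_finrank_ker B.mulVecLin
  rw [Module.finrank_pi] at hrn
  have : B.rank + 1 ≤ Fintype.card ι := by rw [Matrix.rank]; omega
  omega

lemma matrix_drazin_formula {N S : Type*} [Fintype N] [DecidableEq N] [Fintype S] [DecidableEq S]
    (a x : Matrix N N ℂ) (q : Matrix N S ℂ) (rp : Matrix S N ℂ) (k : ℕ)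
    (h1 : a ^ (k+1) * x = a ^ k) (h2 : x * (a * x) = x) (h3 : a * x = x * a)
    (hdec : a ^ k = q * rp) (hrk : (a ^ k).rank = Fintype.card S) :
    IsUnit (rp * (a * q)).det ∧ x = q * ((rp * (a * q))⁻¹ * rp) := by
  have hc : Commute a x := h3
  set b := rp * (a * q) with hbdef
  have hstep : ∀ n : ℕ, a ^ (n + k + 1) * x = a ^ (n + k) := by
    intro n
    have e : n + k + 1 = n + (k + 1) := by omega
    rw [e, pow_add, mul_assoc, h1, ← pow_add]
  have key1 : ∀ j, a ^ (k + j) * x ^ j = a ^ k := by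
    intro j
    induction j with
    | zero => simp
    | succ n ih =>
      have e : k + (n + 1) = n + k + 1 := by omega
      calc a ^ (k + (n+1)) * x ^ (n+1)
          = a ^ (n+k+1) * (x * x ^ n) := by rw [e, pow_succ' x n]
        _ = (a ^ (n+k+1) * x) * x ^ n := by rw [mul_assoc]
        _ = a ^ (n+k) * x ^ n := by rw [hstep]
        _ = a ^ k := by rw [show n + k = k + n by omega]; exact ih
  have key2 : ∀ j, x ^ (j+1) * a ^ j = x := by
    intro j
    induction j with
    | zero => simp
    | succ n ih =>
      have inner : x * (x * a) = x := by rw [← h3]; exact h2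
      calc x ^ (n+1+1) * a ^ (n+1)
          = x ^ n * (x * (x * a)) * a ^ n := by
            rw [pow_succ, pow_succ, pow_succ']
            simp only [Matrix.mul_assoc]
        _ = x ^ (n+1) * a ^ n := by rw [inner, ← pow_succ]
        _ = x := ih
  have hqb : q * b = a ^ (k+1) * q := by
    calc q * b = (q * rp) * (a * q) := by rw [hbdef, Matrix.mul_assoc]
      _ = a ^ k * (a * q) := by rw [← hdec]
      _ = a ^ (k+1) * q := by rw [← Matrix.mul_assoc, ← pow_succ]
  have hqbrp : q * (b * rp) = a ^ (2*k+1) := by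
    calc q * (b * rp) = (q * b) * rp := (Matrix.mul_assoc q b rp).symm
      _ = a ^ (k+1) * (q * rp) := by rw [hqb, Matrix.mul_assoc]
      _ = a ^ (k+1) * a ^ k := by rw [← hdec]
      _ = a ^ (2*k+1) := by rw [← pow_add]; congr 1; omega
  have h2k : a ^ (2*k+1) * x ^ (k+1) = a ^ k := by
    have := key1 (k+1)
    rwa [show k + (k+1) = 2*k+1 by omega] at this
  have hrank_b : b.rank = Fintype.card S := by
    have le1 : Fintype.card S ≤ b.rank := by
      calc Fintype.card S = (a ^ k).rank := hrk.symm
        _ = (a ^ (2*k+1) * x ^ (k+1)).rank := by rw [h2k]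
        _ ≤ (a ^ (2*k+1)).rank := Matrix.rank_mul_le_left _ _
        _ = (q * (b * rp)).rank := by rw [hqbrp]
        _ ≤ (b * rp).rank := Matrix.rank_mul_le_right _ _
        _ ≤ b.rank := Matrix.rank_mul_le_left _ _
    have le2 : b.rank ≤ Fintype.card S := Matrix.rank_le_card_width b
    omega
  have hbdet : IsUnit b.det := isUnit_of_rank_eq_card' b hrank_b
  refine ⟨hbdet, ?_⟩
  have hx2 : x * a ^ (k+2) = a ^ (k+1) := by
    rw [← (hc.pow_left (k+2)).eq, pow_succ' a (k+1), mul_assoc, h1, ← pow_succ']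
  have hxaq : x * (a * q) = q := by
    have e1 : (x * (a * q)) * b = q * b := by
      calc (x * (a * q)) * b = x * a * (q * b) := by simp only [Matrix.mul_assoc]
        _ = x * a * (a ^ (k+1) * q) := by rw [hqb]
        _ = (x * a ^ (k+2)) * q := by
            rw [show a ^ (k+2) = a * a ^ (k+1) from pow_succ' a (k+1)]
            simp only [Matrix.mul_assoc]
        _ = a ^ (k+1) * q := by rw [hx2]
        _ = q * b := hqb.symm
    calc x * (a * q) = (x * (a * q)) * b * b⁻¹ := by
          rw [Matrix.mul_nonsing_inv_cancel_right _ _ hbdet]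
      _ = q * b * b⁻¹ := by rw [e1]
      _ = q := Matrix.mul_nonsing_inv_cancel_right _ _ hbdet
  have haE : a ^ (k+1) * (q * (b⁻¹ * rp)) = a ^ k := by
    calc a ^ (k+1) * (q * (b⁻¹ * rp)) = ((a ^ (k+1) * q) * b⁻¹) * rp := by
          simp only [Matrix.mul_assoc]
      _ = (q * b * b⁻¹) * rp := by rw [hqb]
      _ = q * rp := by rw [Matrix.mul_nonsing_inv_cancel_right _ _ hbdet]
      _ = a ^ k := hdec.symm
  have e2 : x ^ (k+1) * a ^ (k+1) = x * a := by
    calc x ^ (k+1) * a ^ (k+1) = x ^ (k+1) * (a ^ k * a) := by rw [pow_succ a k]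
      _ = (x ^ (k+1) * a ^ k) * a := (Matrix.mul_assoc _ _ _).symm
      _ = x * a := by rw [key2 k]
  calc x = x ^ (k+1) * a ^ k := (key2 k).symm
    _ = x ^ (k+1) * (a ^ (k+1) * (q * (b⁻¹ * rp))) := by rw [haE]
    _ = (x ^ (k+1) * a ^ (k+1)) * (q * (b⁻¹ * rp)) := (Matrix.mul_assoc _ _ _).symm
    _ = x * a * (q * (b⁻¹ * rp)) := by rw [e2]
    _ = (x * (a * q)) * (b⁻¹ * rp) := by simp only [Matrix.mul_assoc]
    _ = q * (b⁻¹ * rp) := by rw [hxaq]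

/-- Corollary 3.4 (Drazin case): the outer-inverse formula built from a full-rank
QR-type decomposition of `A^k` (with `k ≥ ind(A)`) yields the Drazin inverse. -/
theorem MQR_gives_drazin {m p s k : ℕ}
    (M : Matrix (Fin p) (Fin p) ℂ) (hM : IsUnit M.det)
    (A X : Tensor m m p)
    (hind : rankM M (mpow M A k) = rankM M (mpow M A (k + 1)))
    (hrAk : rankM M (mpow M A k) = s * p)
    (h1 : mprod M (mpow M A (k + 1)) X = mpow M A k)
    (h2 : mprod M X (mprod M A X) = X)
    (h3 : mprod M A X = mprod M X A)
    (P : Tensor m m p) (Qt : Tensor m s p) (Rt : Tensor s m p)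
    (hdec : mpow M A k = mprod M Qt (mprod M Rt (mstar M P)))
    (hP1 : mprod M P (mstar M P) = idT M m) (hP2 : mprod M (mstar M P) P = idT M m)
    (hQt : mprod M (mstar M Qt) Qt = idT M s)
    (hrRt : rankM M Rt = s * p) :
    ∃ Y : Tensor s s p,
      mprod M (mprod M Rt (mprod M (mstar M P) (mprod M A Qt))) Y = idT M s ∧
      mprod M Y (mprod M Rt (mprod M (mstar M P) (mprod M A Qt))) = idT M s ∧
      mprod M Qt (mprod M Y (mprod M Rt (mstar M P))) = X := by
  classical
  have h1' : matT M A ^ (k+1) * matT M X = matT M A ^ k := by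
    have := congrArg (matT M) h1
    rwa [matT_mprod hM, matT_mpow hM, matT_mpow hM] at this
  have h2' : matT M X * (matT M A * matT M X) = matT M X := by
    have := congrArg (matT M) h2
    rwa [matT_mprod hM, matT_mprod hM] at this
  have h3' : matT M A * matT M X = matT M X * matT M A := by
    have := congrArg (matT M) h3
    rwa [matT_mprod hM, matT_mprod hM] at this
  have hdec' : matT M A ^ k = matT M Qt * (matT M Rt * matT M (mstar M P)) := by
    have := congrArg (matT M) hdec
    rwa [matT_mpow hM, matT_mprod hM, matT_mprod hM] at this
  have hrk' : (matT M A ^ k).rank = Fintype.card (Fin s × Fin p) := by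
    rw [← matT_mpow hM]
    have hcard : Fintype.card (Fin s × Fin p) = s * p := by simp
    rw [hcard]
    exact hrAk
  obtain ⟨hbdet, hxE⟩ := matrix_drazin_formula (matT M A) (matT M X) (matT M Qt)
    (matT M Rt * matT M (mstar M P)) k h1' h2' h3' hdec' hrk'
  set T : Tensor s s p := mprod M Rt (mprod M (mstar M P) (mprod M A Qt)) with hTdef
  have hmatT : matT M T = (matT M Rt * matT M (mstar M P)) * (matT M A * matT M Qt) := by
    rw [hTdef, matT_mprod hM, matT_mprod hM, matT_mprod hM, Matrix.mul_assoc]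
  have hblocks : ∀ l, IsUnit (hatT M T l).det := by
    have hdb : ((matT M Rt * matT M (mstar M P)) * (matT M A * matT M Qt)).det
        = ∏ l, (hatT M T l).det := by
      rw [← hmatT, matT, Matrix.det_blockDiagonal]
    intro l
    rw [isUnit_iff_ne_zero]
    intro h0
    rw [isUnit_iff_ne_zero, hdb] at hbdet
    exact hbdet (Finset.prod_eq_zero (Finset.mem_univ l) h0)
  set Y0 : Tensor s s p := fun l => ∑ t, M⁻¹ l t • (hatT M T t)⁻¹ with hY0def
  have hY0hat : hatT M Y0 = fun l => (hatT M T l)⁻¹ := by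
    rw [hY0def]; exact hatT_unhat hM _
  have hTY : matT M T * matT M Y0 = 1 := by
    unfold matT
    rw [hY0hat, ← Matrix.blockDiagonal_mul]
    have : (fun l => hatT M T l * (hatT M T l)⁻¹)
        = fun _ => (1 : Matrix (Fin s) (Fin s) ℂ) := by
      funext l; exact Matrix.mul_nonsing_inv _ (hblocks l)
    rw [this]
    exact Matrix.blockDiagonal_one
  have hYT : matT M Y0 * matT M T = 1 := by
    unfold matT
    rw [hY0hat, ← Matrix.blockDiagonal_mul]
    have : (fun l => (hatT M T l)⁻¹ * hatT M T l)
        = fun _ => (1 : Matrix (Fin s) (Fin s) ℂ) := by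
      funext l; exact Matrix.nonsing_inv_mul _ (hblocks l)
    rw [this]
    exact Matrix.blockDiagonal_one
  refine ⟨Y0, ?_, ?_, ?_⟩
  · apply matT_injective hM
    rw [matT_mprod hM, matT_idT hM]
    exact hTY
  · apply matT_injective hM
    rw [matT_mprod hM, matT_idT hM]
    exact hYT
  · apply matT_injective hM
    rw [matT_mprod hM, matT_mprod hM, matT_mprod hM]
    have hYinv : matT M Y0
        = ((matT M Rt * matT M (mstar M P)) * (matT M A * matT M Qt))⁻¹ := by
      rw [← hmatT]
      exact (Matrix.inv_eq_left_inv hYT).symm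
    rw [hYinv, hxE]
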